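/- Let H, Q, K be finite types (hosts, queues/VNFs, service classes), let A : H → Q → Prop be a placement such that every queue q is placed at exactly one host (for each q there is a unique h with A(h,q)), and let γ : K → Q → ℝ give the expected visit counts. Define a directed graph G on the vertex type V = H ⊕ Q ⊕ K with edges: from queue q to host h and from host h to queue q whenever A(h,q); from class k to queue q whenever γ_k(q) > 0; and from queue q to class k whenever γ_k(q) > 0 and γ_j(q) = 0 for every class j ≠ k. Let crit : K → Prop and strained : H → Prop be predicates satisfying: (a) some class is critical; (b) if class k is critical, γ_k(q) > 0, and A(h,q), then host h is strained; (c) if host h is strained and A(h,q), then there exists a class k with crit k and γ_k(q) > 0. If G is strongly connected (every vertex reachable from every vertex via the reflexive–transitive closure of the edge relation), then every class in K is critical and every host in H is strained. -/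

import Mathlib

/-!
Mark a host when it is strained, a queue when it serves a critical class, and a class when it is
critical. Property 4 (`hb`) and Property 5 (`hc`) make the marking propagate along every edge of the
host–queue–class graph; a queue passes its mark to a class only when that class is its sole user,
which is then necessarily the critical one. Lemma 1 (`ha`) marks one class, so strong connectivity
spreads the marking to every vertex.
-/

/-- The host–queue–class graph of the paper: vertices are hosts `H`, queues `Q`,
and classes `K`; edges link a queue and its host in both directions, a class to
every queue it uses, and a queue to a class when that class is the only one using it. -/
def hqkEdge {H Q K : Type*} (A : H → Q → Prop) (γ : K → Q → ℝ) :
    (H ⊕ Q ⊕ K) → (H ⊕ Q ⊕ K) → Prop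
  | Sum.inl h, Sum.inr (Sum.inl q) => A h q
  | Sum.inr (Sum.inl q), Sum.inl h => A h q
  | Sum.inr (Sum.inr k), Sum.inr (Sum.inl q) => 0 < γ k q
  | Sum.inr (Sum.inl q), Sum.inr (Sum.inr k) => 0 < γ k q ∧ ∀ j, j ≠ k → γ j q = 0
  | _, _ => False

theorem Relation.ReflTransGen.of_imp_of_rel {α : Type*} {r : α → α → Prop} {P : α → Prop}
    (hP : ∀ a b, r a b → P a → P b) {a b : α} (hab : Relation.ReflTransGen r a b) (ha : P a) :
    P b := by
  induction hab with
  | refl => exact ha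
  | tail _ hbc ih => exact hP _ _ hbc ih

section HostQueueClass

variable {H Q K : Type*}

def hqkMarked (γ : K → Q → ℝ) (crit : K → Prop) (strained : H → Prop) : H ⊕ Q ⊕ K → Prop
  | Sum.inl h => strained h
  | Sum.inr (Sum.inl q) => ∃ k, crit k ∧ 0 < γ k q
  | Sum.inr (Sum.inr k) => crit k

theorem hqkMarked_of_hqkEdge {A : H → Q → Prop} {γ : K → Q → ℝ} {crit : K → Prop}
    {strained : H → Prop} (hb : ∀ k q h, crit k → 0 < γ k q → A h q → strained h)
    (hc : ∀ h q, strained h → A h q → ∃ k, crit k ∧ 0 < γ k q) :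
    ∀ u v, hqkEdge A γ u v → hqkMarked γ crit strained u → hqkMarked γ crit strained v
  | Sum.inl h, Sum.inr (Sum.inl q), hhq, hh => hc h q hh hhq
  | Sum.inr (Sum.inl q), Sum.inl h, hhq, ⟨k, hk, hkq⟩ => hb k q h hk hkq hhq
  | Sum.inr (Sum.inr k), Sum.inr (Sum.inl q), hkq, hk => ⟨k, hk, hkq⟩
  | Sum.inr (Sum.inl q), Sum.inr (Sum.inr k), ⟨_, hsole⟩, ⟨j, hj, hjq⟩ => by
    obtain rfl : j = k := by_contra fun hjk => hjq.ne' (hsole j hjk)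
    exact hj

end HostQueueClass

theorem stmt_5_general {H Q K : Type*}
    (A : H → Q → Prop)
    (γ : K → Q → ℝ)
    (crit : K → Prop) (strained : H → Prop)
    (ha : ∃ k, crit k)
    (hb : ∀ k q h, crit k → 0 < γ k q → A h q → strained h)
    (hc : ∀ h q, strained h → A h q → ∃ k, crit k ∧ 0 < γ k q)
    (hconn : ∀ u v : H ⊕ Q ⊕ K, Relation.ReflTransGen (hqkEdge A γ) u v) :
    (∀ k, crit k) ∧ (∀ h, strained h) := by
  obtain ⟨k₀, hk₀⟩ := ha
  have marked : ∀ v, hqkMarked γ crit strained v := fun v =>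
    (hconn (Sum.inr (Sum.inr k₀)) v).of_imp_of_rel (hqkMarked_of_hqkEdge hb hc) hk₀
  exact ⟨fun k => marked (Sum.inr (Sum.inr k)), fun h => marked (Sum.inl h)⟩

/-- If the host–queue–class graph is strongly connected, then all classes are
critical and all hosts are strained. -/
theorem stmt_5 {H Q K : Type*} [Fintype H] [Fintype Q] [Fintype K]
    (A : H → Q → Prop) (hA : ∀ q : Q, ∃! h : H, A h q)
    (γ : K → Q → ℝ)
    (crit : K → Prop) (strained : H → Prop)
    (ha : ∃ k, crit k)
    (hb : ∀ k q h, crit k → 0 < γ k q → A h q → strained h)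
    (hc : ∀ h q, strained h → A h q → ∃ k, crit k ∧ 0 < γ k q)
    (hconn : ∀ u v : H ⊕ Q ⊕ K, Relation.ReflTransGen (hqkEdge A γ) u v) :
    (∀ k, crit k) ∧ (∀ h, strained h) :=
  stmt_5_general A γ crit strained ha hb hc hconn
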